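/- Let G_w be an edge-weighted graph with edge ideal I(G_w) ⊆ S = k[x_1,…,x_n]. Suppose J = √(I(G_w) : x^a) is an associated radical of I(G_w) and K is an associated radical of J. Then K is also an associated radical of I(G_w). -/
import Mathlib


open MvPolynomial

open scoped Classical

/-- The depth of `S/I`, where `S` is a polynomial ring over a field `k` and `I ⊆ S` an ideal,
with respect to the maximal homogeneous ideal `𝔪 = (X s : s : σ)`: it is the least `i` such
that the `i`-th local cohomology module `H^i_𝔪(S/I)` is nonzero. -/
noncomputable def depthQuot {k : Type} [Field k] {σ : Type} (I : Ideal (MvPolynomial σ k)) : ℕ :=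
  sInf {i : ℕ |
    Nontrivial ((localCohomology (Ideal.span (Set.range (X : σ → MvPolynomial σ k))) i).obj
      (ModuleCat.of (MvPolynomial σ k) (MvPolynomial σ k ⧸ I)))}

/-- The degree-`d` graded piece of `S/I` (for `I` a homogeneous, e.g. monomial, ideal):
the image of the homogeneous polynomials of degree `d`. -/
noncomputable def degPiece {k : Type} [Field k] {σ : Type} (I : Ideal (MvPolynomial σ k))
    (d : ℕ) : Submodule k (MvPolynomial σ k ⧸ I) :=
  (homogeneousSubmodule σ k d).map (Ideal.Quotient.mkₐ k I).toLinearMap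

/-- The Koszul differential on `(S/I)`-valued chains indexed by subsets of the variables:
this computes `Tor_•(S/I, k)` via the Koszul complex on all the variables. -/
noncomputable def koszulD {k : Type} [Field k] {σ : Type} [Fintype σ]
    (I : Ideal (MvPolynomial σ k)) (c : Finset σ → MvPolynomial σ k ⧸ I) :
    Finset σ → MvPolynomial σ k ⧸ I :=
  fun G => ∑ t ∈ Gᶜ,
    ((-1 : k) ^ (G.filter fun s => Fintype.equivFin σ s < Fintype.equivFin σ t).card) •
      (Ideal.Quotient.mk I (X t) * c (insert t G))

/-- Nonvanishing of the internal degree `i + d` part of the `i`-th Koszul homology of `S/I`,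
i.e. of the graded piece `Tor_i(S/I, k)_{i+d}`: there is a homogeneous cycle (supported in
homological degree `i`, with coefficients of degree `d`) which is not a boundary. -/
def KoszulHomologyNonzero {k : Type} [Field k] {σ : Type} [Fintype σ]
    (I : Ideal (MvPolynomial σ k)) (i d : ℕ) : Prop :=
  ∃ c : Finset σ → MvPolynomial σ k ⧸ I,
    (∀ F, F.card ≠ i → c F = 0) ∧ (∀ F, c F ∈ degPiece I d) ∧ koszulD I c = 0 ∧
    ¬ ∃ c' : Finset σ → MvPolynomial σ k ⧸ I,
        (∀ F, F.card ≠ i + 1 → c' F = 0) ∧ (∀ F, c' F ∈ degPiece I (d - 1)) ∧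
        koszulD I c' = c

/-- The Castelnuovo–Mumford regularity of `S/I`:
`reg (S/I) = max { j - i : Tor_i(S/I, k)_j ≠ 0 }`, computed via the Koszul complex. -/
noncomputable def regQuot {k : Type} [Field k] {σ : Type} [Fintype σ]
    (I : Ideal (MvPolynomial σ k)) : ℕ :=
  sSup {d : ℕ | ∃ i : ℕ, KoszulHomologyNonzero I i d}

/-- The tableau ideal `I(Y) = ((x_i y_j)^{w(i,j)} : j < λ_i)` of a filling `w` of the Young
diagram `λ`, inside `S = k[x_1,…,x_n, y_1,…,y_m]` (rows are `Sum.inl`, columns `Sum.inr`;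
all indices are 0-based). -/
noncomputable def tableauIdeal (k : Type) [Field k] (n m : ℕ) (lam : Fin n → ℕ)
    (w : Fin n → Fin m → ℕ) : Ideal (MvPolynomial (Fin n ⊕ Fin m) k) :=
  Ideal.span {p | ∃ (i : Fin n) (j : Fin m), (j : ℕ) < lam i ∧
    p = (X (Sum.inl i) * X (Sum.inr j)) ^ (w i j)}

/-- `(γ, δ)` is a minimal box of the filling `w` of the Young diagram `λ`:
it is a box, its weight is the minimum weight `ω`, and every other box `(i, j)`
with `i ≤ γ` and `j ≤ δ` has weight strictly larger than `ω`. -/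
def IsMinimalBox {n m : ℕ} (lam : Fin n → ℕ) (w : Fin n → Fin m → ℕ)
    (γ : Fin n) (δ : Fin m) : Prop :=
  (δ : ℕ) < lam γ ∧
  (∀ (i : Fin n) (j : Fin m), (j : ℕ) < lam i → w γ δ ≤ w i j) ∧
  (∀ (i : Fin n) (j : Fin m), (j : ℕ) < lam i → i ≤ γ → j ≤ δ → (i, j) ≠ (γ, δ) →
    w γ δ < w i j)

/-- The edge ideal `I(G_w) = ((x_i x_j)^{w(i,j)} : {i,j} ∈ E(G))` of the edge-weighted graph
`(G, w)`. -/
noncomputable def edgeWeightIdeal (k : Type) [Field k] {n : ℕ} (G : SimpleGraph (Fin n))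
    (w : Fin n → Fin n → ℕ) : Ideal (MvPolynomial (Fin n) k) :=
  Ideal.span {p | ∃ i j, G.Adj i j ∧ p = (X i * X j) ^ (w i j)}

/-- `J` is an associated radical of `I`: `J = √(I : u)` for some monomial `u ∉ I`. -/
def IsAssocRadical {k : Type} [Field k] {σ : Type} (I J : Ideal (MvPolynomial σ k)) : Prop :=
  ∃ u : MvPolynomial σ k, (∃ e : σ →₀ ℕ, u = monomial e 1) ∧ u ∉ I ∧
    J = (Submodule.colon I (Ideal.span {u})).radical

/-- Lemma: if `J` is an associated radical of `I(G_w)` and `K` is an associated radical of `J`,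
then `K` is an associated radical of `I(G_w)`. -/
theorem stmt7 {k : Type} [Field k] {n : ℕ} (G : SimpleGraph (Fin n))
    (w : Fin n → Fin n → ℕ) (hsym : ∀ i j, w i j = w j i)
    (hpos : ∀ i j, G.Adj i j → 1 ≤ w i j)
    (J K : Ideal (MvPolynomial (Fin n) k))
    (hJ : IsAssocRadical (edgeWeightIdeal k G w) J) (hK : IsAssocRadical J K) :
    IsAssocRadical (edgeWeightIdeal k G w) K := by
  classical
  obtain ⟨u, ⟨e, he⟩, huI, hJdef⟩ := hJ
  obtain ⟨v, ⟨f, hf⟩, hvJ, hKdef⟩ := hK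
  set I := edgeWeightIdeal k G w with hI
  obtain ⟨s, hs⟩ := (IsNoetherian.noetherian K : K.FG)
  have hgen : ∀ g ∈ s, ∃ p r : ℕ, g ^ p * v ^ r * u ∈ I := by
    intro g hg
    have hgK : g ∈ K := hs ▸ Ideal.subset_span hg
    rw [hKdef, Ideal.mem_radical_iff] at hgK
    obtain ⟨m, hm⟩ := hgK
    rw [Ideal.mem_colon_span_singleton] at hm
    rw [hJdef, Ideal.mem_radical_iff] at hm
    obtain ⟨r, hr⟩ := hm
    rw [Ideal.mem_colon_span_singleton] at hr
    refine ⟨m * r, r, ?_⟩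
    have h1 : (g ^ m * v) ^ r * u = g ^ (m * r) * v ^ r * u := by ring
    rwa [h1] at hr
  choose p r hpr using hgen
  set M : ℕ := s.attach.sup (fun g => r g g.2) with hM
  refine ⟨u * v ^ (M + 1), ⟨e + (M + 1) • f, by
      rw [he, hf, monomial_pow, monomial_mul, one_mul, one_pow]⟩, ?_, ?_⟩
  · intro hmem
    apply hvJ
    rw [hJdef, Ideal.mem_radical_iff]
    exact ⟨M + 1, Ideal.mem_colon_span_singleton.mpr (by rwa [mul_comm] at hmem)⟩
  · apply le_antisymm
    · rw [← hs, Submodule.span_le]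
      intro g hg
      rw [Finset.mem_coe] at hg
      have hrN : r g hg ≤ M + 1 :=
        le_trans (Finset.le_sup (f := fun g : {x // x ∈ s} => r g.1 g.2)
          (Finset.mem_attach s ⟨g, hg⟩)) (Nat.le_succ _)
      rw [SetLike.mem_coe, Ideal.mem_radical_iff]
      refine ⟨p g hg, Ideal.mem_colon_span_singleton.mpr ?_⟩
      have hv : v ^ (M + 1) = v ^ (r g hg) * v ^ (M + 1 - r g hg) := by
        rw [← pow_add, Nat.add_sub_cancel' hrN]
      have h2 : g ^ p g hg * (u * v ^ (M + 1))
          = (g ^ p g hg * v ^ (r g hg) * u) * v ^ (M + 1 - r g hg) := by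
        rw [hv]; ring
      rw [h2]
      exact Ideal.mul_mem_right _ _ (hpr g hg)
    · intro x hx
      rw [Ideal.mem_radical_iff] at hx
      obtain ⟨t, ht⟩ := hx
      rw [Ideal.mem_colon_span_singleton] at ht
      rw [hKdef, Ideal.mem_radical_iff]
      refine ⟨t, Ideal.mem_colon_span_singleton.mpr ?_⟩
      rw [hJdef, Ideal.mem_radical_iff]
      refine ⟨M + 1, Ideal.mem_colon_span_singleton.mpr ?_⟩
      have h3 : (x ^ t * v) ^ (M + 1) * u
          = x ^ (t * M) * (x ^ t * (u * v ^ (M + 1))) := by ring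
      rw [h3]
      exact Ideal.mul_mem_left _ _ ht
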